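/- arXiv:2102.00906 — 5 statements merged into one kernel-verified Lean document; each statement's English description precedes it below -/
import Mathlib

section
/- A nonempty product of distinct Fermat numbers is never a perfect square. -/
/-!
Distinct Fermat numbers are pairwise coprime (Goldbach), so a square product of them would make
each factor a square. But `F 0 = 3`, and `F (n + 1) = (F n - 1) ^ 2 + 1` lies strictly between
two consecutive squares.
-/

def fermat (n : ℕ) : ℕ := 2 ^ (2 ^ n) + 1

namespace Nat

lemma not_isSquare_sq_add_one {m : ℕ} (hm : m ≠ 0) : ¬IsSquare (m ^ 2 + 1) := by
  rintro ⟨r, hr⟩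
  refine not_exists_sq' (lt_add_one _) ?_ ⟨r, by rw [hr, sq]⟩
  nlinarith [Nat.one_le_iff_ne_zero.mpr hm]

lemma not_isSquare_fermatNumber (n : ℕ) : ¬IsSquare (fermatNumber n) := by
  cases n with
  | zero => rw [fermatNumber_zero]; norm_num
  | succ n =>
    rw [fermatNumber_succ]
    exact not_isSquare_sq_add_one (by have := three_le_fermatNumber n; lia)

lemma Coprime.isSquare_left_of_isSquare_mul {a b : ℕ} (hab : a.Coprime b)
    (h : IsSquare (a * b)) : IsSquare a := by
  obtain ⟨c, hc⟩ := h
  obtain ⟨d, rfl⟩ := exists_eq_pow_of_mul_eq_pow (Nat.isUnit_iff.mpr hab)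
    (hc.trans (sq c).symm)
  exact ⟨d, sq d⟩

lemma not_isSquare_prod_of_pairwise_coprime {ι : Type*} {f : ι → ℕ}
    (hcop : Pairwise fun i j ↦ Coprime (f i) (f j)) (hsq : ∀ i, ¬IsSquare (f i)) {s : Finset ι}
    (hs : s.Nonempty) : ¬IsSquare (∏ i ∈ s, f i) := by
  classical
  obtain ⟨a, ha⟩ := hs
  rw [← Finset.mul_prod_erase s f ha]
  refine fun h ↦ hsq a (Coprime.isSquare_left_of_isSquare_mul ?_ h)
  exact Coprime.prod_right fun i hi ↦ hcop (Finset.ne_of_mem_erase hi).symm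

end Nat

theorem fermat_prod_not_square (S : Finset ℕ) (hS : S.Nonempty) :
    ¬ IsSquare (∏ n ∈ S, fermat n) :=
  -- `fermat` is `Nat.fermatNumber` by definition, so the two are interchangeable here.
  Nat.not_isSquare_prod_of_pairwise_coprime Nat.pairwise_coprime_fermatNumber
    Nat.not_isSquare_fermatNumber hS
end

section
/- (Pépin's test, sufficiency) Let n ≥ 1. If 3^((F_n − 1)/2) ≡ −1 (mod F_n), then F_n is prime. -/
theorem pepin_sufficiency_general {n : ℕ}
    (h : (3 : ZMod (fermat n)) ^ ((fermat n - 1) / 2) = -1) :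
    Nat.Prime (fermat n) :=
  Nat.pepin_primality' n h

theorem pepin_sufficiency {n : ℕ} (hn : 1 ≤ n)
    (h : (3 : ZMod (fermat n)) ^ ((fermat n - 1) / 2) = -1) :
    Nat.Prime (fermat n) :=
  pepin_sufficiency_general h
end

section
/- (Pépin's test, necessity) Let n ≥ 1. If F_n is prime, then 3^((F_n − 1)/2) ≡ −1 (mod F_n). -/
theorem fermat_succ (n : ℕ) : fermat (n + 1) = 4 ^ 2 ^ n + 1 := by
  rw [fermat, pow_succ, pow_mul']
  norm_num

theorem fermat_succ_mod_four (n : ℕ) : fermat (n + 1) % 4 = 1 := by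
  rw [fermat_succ, Nat.add_mod, Nat.pow_mod, Nat.mod_self, zero_pow (by positivity)]
  norm_num

theorem fermat_succ_mod_three (n : ℕ) : fermat (n + 1) % 3 = 2 := by
  rw [fermat_succ, Nat.add_mod, Nat.pow_mod]
  norm_num

theorem legendreSym_three_eq_neg_one {p : ℕ} [Fact p.Prime]
    (h4 : p % 4 = 1) (h3 : p % 3 = 2) : legendreSym p 3 = -1 := by
  have hp3 : ((p : ℤ) % (3 : ℕ)) = 2 := by omega
  calc legendreSym p 3 = legendreSym 3 p :=
        (legendreSym.quadratic_reciprocity_one_mod_four h4 (by norm_num)).symm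
    _ = legendreSym 3 2 := by rw [legendreSym.mod, hp3]
    _ = -1 := by decide

theorem pepin_necessity {n : ℕ} (hn : 1 ≤ n) (hp : Nat.Prime (fermat n)) :
    (3 : ZMod (fermat n)) ^ ((fermat n - 1) / 2) = -1 := by
  have : Fact (fermat n).Prime := ⟨hp⟩
  obtain ⟨m, rfl⟩ := Nat.exists_eq_add_of_le' hn
  have h4 := fermat_succ_mod_four m
  have euler := legendreSym.eq_pow (fermat (m + 1)) 3
  rw [legendreSym_three_eq_neg_one h4 (fermat_succ_mod_three m)] at euler
  rw [show (fermat (m + 1) - 1) / 2 = fermat (m + 1) / 2 by omega]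
  exact_mod_cast euler.symm
end

section
/- Let p be an odd prime, write p − 1 = 2^e · k with k odd, and let f be the multiplicative order of 2 modulo k. Then for every m ≥ e, 2^(2^(m+f)) ≡ 2^(2^m) (mod p); equivalently, F_{m+f} ≡ F_m (mod p). In other words, the sequence of Fermat numbers is eventually periodic modulo p. -/
theorem ZMod.pow_eq_pow_of_card_sub_one_dvd {p : ℕ} [Fact p.Prime] (x : ZMod p) {i j : ℕ}
    (hi : 1 ≤ i) (hij : i ≤ j) (hdvd : p - 1 ∣ j - i) : x ^ j = x ^ i := by
  obtain ⟨t, ht⟩ := hdvd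
  rcases eq_or_ne x 0 with rfl | hx
  · rw [zero_pow (by omega), zero_pow (by omega)]
  · rw [show j = i + (p - 1) * t by omega, pow_add, pow_mul, ZMod.pow_card_sub_one_eq_one hx,
      one_pow, mul_one]

theorem Nat.pow_modEq_pow_of_prime_sub_one_dvd {p : ℕ} (hp : p.Prime) (a : ℕ) {i j : ℕ}
    (hi : 1 ≤ i) (hij : i ≤ j) (hdvd : p - 1 ∣ j - i) : a ^ j ≡ a ^ i [MOD p] := by
  have : Fact p.Prime := ⟨hp⟩
  rw [← ZMod.natCast_eq_natCast_iff]
  push_cast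
  exact ZMod.pow_eq_pow_of_card_sub_one_dvd _ hi hij hdvd

theorem Nat.pow_orderOf_modEq_one (a n : ℕ) : a ^ orderOf (a : ZMod n) ≡ 1 [MOD n] := by
  rw [← ZMod.natCast_eq_natCast_iff]
  push_cast
  exact pow_orderOf_eq_one _

theorem Nat.pow_mul_dvd_pow_add_sub_pow {b e k f m : ℕ} (hb : 1 ≤ b) (hem : e ≤ m)
    (hf : b ^ f ≡ 1 [MOD k]) : b ^ e * k ∣ b ^ (m + f) - b ^ m := by
  rw [pow_add, ← Nat.mul_sub_one]
  exact mul_dvd_mul (pow_dvd_pow b hem) ((Nat.modEq_iff_dvd' (Nat.one_le_pow _ _ hb)).mp hf.symm)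

theorem fermat_eventually_periodic_general {p e k f : ℕ} (hp : p.Prime)
    (hfac : p - 1 = 2 ^ e * k) (hf : f = orderOf (2 : ZMod k)) :
    ∀ m, e ≤ m →
      2 ^ (2 ^ (m + f)) ≡ 2 ^ (2 ^ m) [MOD p] ∧ fermat (m + f) ≡ fermat m [MOD p] := by
  intro m hm
  have hperiod : p - 1 ∣ 2 ^ (m + f) - 2 ^ m :=
    hfac ▸ Nat.pow_mul_dvd_pow_add_sub_pow one_le_two hm (hf ▸ Nat.pow_orderOf_modEq_one 2 k)
  have hpow : 2 ^ (2 ^ (m + f)) ≡ 2 ^ (2 ^ m) [MOD p] :=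
    Nat.pow_modEq_pow_of_prime_sub_one_dvd hp 2 Nat.one_le_two_pow
      (Nat.pow_le_pow_right two_pos (Nat.le_add_right m f)) hperiod
  exact ⟨hpow, hpow.add_right 1⟩

theorem fermat_eventually_periodic {p e k f : ℕ} (hp : p.Prime) (hodd : Odd p)
    (hfac : p - 1 = 2 ^ e * k) (hk : Odd k) (hf : f = orderOf (2 : ZMod k)) :
    ∀ m, e ≤ m →
      2 ^ (2 ^ (m + f)) ≡ 2 ^ (2 ^ m) [MOD p] ∧ fermat (m + f) ≡ fermat m [MOD p] :=
  fermat_eventually_periodic_general hp hfac hf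
end

section
/- Let p be an odd prime, write p − 1 = 2^e · k with k odd, and let f be the multiplicative order of 2 modulo k. If there exists m ≥ e such that F_m is a quadratic residue modulo p (and p ∤ F_m), then there exist infinitely many n such that F_n is a quadratic residue modulo p; hence p is not an elite prime. -/
theorem FiniteField.pow_eq_pow_of_modEq_card_sub_one {K : Type*} [GroupWithZero K] [Fintype K]
    (a : K) {x y : ℕ} (hx : x ≠ 0) (hy : y ≠ 0) (h : x ≡ y [MOD Fintype.card K - 1]) :
    a ^ x = a ^ y := by
  rcases eq_or_ne a 0 with rfl | ha
  · rw [zero_pow hx, zero_pow hy]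
  · have hone := pow_card_sub_one_eq_one a ha
    rw [pow_eq_pow_mod x hone, pow_eq_pow_mod y hone, h]

theorem Nat.two_pow_modEq_two_pow_add {e k t n : ℕ} (hn : e ≤ n) (ht : 2 ^ t ≡ 1 [MOD k]) :
    2 ^ n ≡ 2 ^ (n + t) [MOD 2 ^ e * k] := by
  have h : 2 ^ n * 1 ≡ 2 ^ n * 2 ^ t [MOD 2 ^ n * k] := ht.symm.mul_left' (2 ^ n)
  rw [mul_one, ← pow_add] at h
  exact h.of_dvd (mul_dvd_mul_right (pow_dvd_pow 2 hn) k)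

theorem fermat_modEq_fermat_add {p e k t n : ℕ} (hp : p.Prime) (hfac : p - 1 = 2 ^ e * k)
    (ht : 2 ^ t ≡ 1 [MOD k]) (hn : e ≤ n) : fermat n ≡ fermat (n + t) [MOD p] := by
  have : Fact p.Prime := ⟨hp⟩
  have hexp : 2 ^ n ≡ 2 ^ (n + t) [MOD Fintype.card (ZMod p) - 1] := by
    rw [ZMod.card, hfac]
    exact Nat.two_pow_modEq_two_pow_add hn ht
  rw [← ZMod.natCast_eq_natCast_iff]
  simp only [fermat, Nat.cast_add, Nat.cast_pow, Nat.cast_ofNat, Nat.cast_one]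
  rw [FiniteField.pow_eq_pow_of_modEq_card_sub_one 2 (by positivity) (by positivity) hexp]

theorem not_elite_of_qr_general {p e k : ℕ} (hp : p.Prime)
    (hfac : p - 1 = 2 ^ e * k) (hk : Odd k)
    {m : ℕ} (hm : e ≤ m)
    (hQR : ∃ x : ℕ, x ^ 2 ≡ fermat m [MOD p]) :
    (∀ N : ℕ, ∃ n, N ≤ n ∧ ∃ x : ℕ, x ^ 2 ≡ fermat n [MOD p]) ∧
      ¬ (∃ N : ℕ, ∀ n, N ≤ n → ¬ ∃ x : ℕ, x ^ 2 ≡ fermat n [MOD p]) := by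
  obtain ⟨x, hx⟩ := hQR
  have htot : 0 < k.totient := Nat.totient_pos.mpr hk.pos
  have hEuler : 2 ^ k.totient ≡ 1 [MOD k] := Nat.ModEq.pow_totient (Nat.coprime_two_left.mpr hk)
  have hrecur : ∀ N, ∃ n, N ≤ n ∧ ∃ x : ℕ, x ^ 2 ≡ fermat n [MOD p] := by
    intro N
    have hperiod : 2 ^ (k.totient * N) ≡ 1 [MOD k] := by
      simpa only [pow_mul, one_pow] using hEuler.pow N
    refine ⟨m + k.totient * N, ?_, x, hx.trans (fermat_modEq_fermat_add hp hfac hperiod hm)⟩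
    exact (Nat.le_mul_of_pos_left N htot).trans (Nat.le_add_left _ m)
  exact ⟨hrecur, fun ⟨N, hN⟩ =>
    let ⟨n, hn, hsq⟩ := hrecur N
    hN n hn hsq⟩

theorem not_elite_of_qr {p e k f : ℕ} (hp : p.Prime) (hodd : Odd p)
    (hfac : p - 1 = 2 ^ e * k) (hk : Odd k) (hf : f = orderOf (2 : ZMod k))
    {m : ℕ} (hm : e ≤ m) (hpF : ¬ p ∣ fermat m)
    (hQR : ∃ x : ℕ, x ^ 2 ≡ fermat m [MOD p]) :
    (∀ N : ℕ, ∃ n, N ≤ n ∧ ∃ x : ℕ, x ^ 2 ≡ fermat n [MOD p]) ∧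
      ¬ (∃ N : ℕ, ∀ n, N ≤ n → ¬ ∃ x : ℕ, x ^ 2 ≡ fermat n [MOD p]) :=
  not_elite_of_qr_general hp hfac hk hm hQR
end
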